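/- arXiv:1909.07041 — 2 statements merged into one kernel-verified Lean document; each statement's English description precedes it below -/
import Mathlib

section
/- Define the sequence S_t by S_0 = 1 and S_t = 2(m+2)^2 S_{t−1} − (m+2)(V_{t−1} − 1)(m + V_{t−1}) for t ≥ 1, where V_t = (m+2)^t + 1 and m ≥ 1. Then S_t = [2(m+2)^2]^t − (2^t − 1)(m+2)^{2t−1} − (m+1)(m+2)^t([2(m+2)]^t − 1)/(2(m+2) − 1) for all t ≥ 0. -/
lemma aux_pow_sub (x : ℚ) (hx : x ≠ 0) (t : ℕ) :
    ((2:ℚ)^t - 1) * x ^ (2*t - 1) = ((2:ℚ)^t - 1) * x ^ (2*t) / x := by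
  cases t with
  | zero => simp
  | succ n =>
    have : 2 * (n+1) - 1 = 2*n + 1 := by omega
    rw [this, show 2*(n+1) = (2*n+1)+1 by ring, pow_succ]
    field_simp
    ring

/-- Closed form for the recurrence `S 0 = 1`,
`S t = 2(m+2)^2 S (t-1) - (m+2)(V_{t-1} - 1)(m + V_{t-1})` with `V_t = (m+2)^t + 1`:
`S t = [2(m+2)^2]^t - (2^t - 1)(m+2)^{2t-1} - (m+1)(m+2)^t([2(m+2)]^t - 1)/(2(m+2)-1)`. -/
theorem starFractal_model_distSum_closed_form (m : ℕ) (hm : 1 ≤ m) (S : ℕ → ℚ)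
    (h0 : S 0 = 1)
    (hrec : ∀ t : ℕ, S (t + 1) =
      2 * ((m : ℚ) + 2) ^ 2 * S t
        - ((m : ℚ) + 2) * ((((m : ℚ) + 2) ^ t + 1) - 1)
          * ((m : ℚ) + (((m : ℚ) + 2) ^ t + 1)))
    (t : ℕ) :
    S t = (2 * ((m : ℚ) + 2) ^ 2) ^ t
        - ((2 : ℚ) ^ t - 1) * ((m : ℚ) + 2) ^ (2 * t - 1)
        - ((m : ℚ) + 1) * ((m : ℚ) + 2) ^ t * ((2 * ((m : ℚ) + 2)) ^ t - 1)
          / (2 * ((m : ℚ) + 2) - 1) := by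
  have hx : ((m:ℚ) + 2) ≠ 0 := by positivity
  have hd : (2 * ((m:ℚ) + 2) - 1) ≠ 0 := by
    have : (0:ℚ) < (m:ℚ) + 2 := by positivity
    nlinarith
  induction t with
  | zero => simpa using h0
  | succ n ih =>
    rw [hrec n, ih, aux_pow_sub _ hx, aux_pow_sub _ hx]
    have h1 : 2*(n+1) = 2*n + 2 := by ring
    rw [h1]
    field_simp
    ring
end

section
/- For m ≥ 1, the average geodesic distance ⟨S_t⟩ = S_t/(V_t(V_t−1)/2) of the star-fractal tree model, where S_t = [2(m+2)^2]^t − (2^t−1)(m+2)^{2t−1} − (m+1)(m+2)^t([2(m+2)]^t−1)/(2(m+2)−1) and V_t = (m+2)^t + 1, satisfies ⟨S_t⟩/2^t → c for a positive constant c as t → ∞; in particular ⟨S_t⟩ grows like 2^t (it is bounded above and below by positive constant multiples of 2^t for large t). -/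
open Filter Topology

/-!
Write `q = m + 2`. Dividing numerator and denominator of `⟨S_t⟩ / 2^t` by `2^t q^{2t}` leaves
a rational expression in `q⁻ᵗ` and `2⁻ᵗ`, both of which tend to `0`; the limit is
`2 (1 - 1/q - (q-1)/(2q-1)) = 2 (q-1)² / (q (2q-1))`, which is positive as soon as `q > 1`.
-/

namespace StarFractal

/-- The closed form of `S_t`, with `q = m + 2` and `K = m + 1` as free parameters. -/
noncomputable def distSum (q K : ℝ) (t : ℕ) : ℝ :=
  (2 * q ^ 2) ^ t - (2 ^ t - 1) * q ^ (2 * t - 1) - K * q ^ t * ((2 * q) ^ t - 1) / (2 * q - 1)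

noncomputable def numVertices (q : ℝ) (t : ℕ) : ℝ := q ^ t + 1

noncomputable def avgDist (q K : ℝ) (t : ℕ) : ℝ :=
  distSum q K t / (numVertices q t * (numVertices q t - 1) / 2)

noncomputable def avgDistRate (q K : ℝ) : ℝ := 2 * (1 - 1 / q - K / (2 * q - 1))

theorem avgDist_div_two_pow_eq {q : ℝ} (K : ℝ) (hq : 1 < q) {t : ℕ} (ht : 1 ≤ t) :
    avgDist q K t / 2 ^ t =
      2 * (1 - (1 - (2⁻¹ : ℝ) ^ t) / q - K * (1 - q⁻¹ ^ t * (2⁻¹ : ℝ) ^ t) / (2 * q - 1)) /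
        (1 + q⁻¹ ^ t) := by
  have hq0 : q ≠ 0 := by positivity
  have h2q : 2 * q - 1 ≠ 0 := by linarith
  have hqt : q ^ t + 1 ≠ 0 := by positivity
  have hpow : q ^ (2 * t - 1) = q ^ t * q ^ t / q := by
    rw [pow_sub₀ q hq0 (by omega), pow_one, two_mul, pow_add, div_eq_mul_inv]
  simp only [avgDist, distSum, numVertices, hpow, mul_pow, inv_pow, ← pow_mul]
  field_simp
  ring

theorem tendsto_avgDist_div_two_pow {q : ℝ} (K : ℝ) (hq : 1 < q) :
    Tendsto (fun t => avgDist q K t / 2 ^ t) atTop (𝓝 (avgDistRate q K)) := by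
  have hq' : Tendsto (fun t : ℕ => q⁻¹ ^ t) atTop (𝓝 0) :=
    tendsto_pow_atTop_nhds_zero_of_lt_one (by positivity) (inv_lt_one_of_one_lt₀ hq)
  have h2 : Tendsto (fun t : ℕ => (2⁻¹ : ℝ) ^ t) atTop (𝓝 0) :=
    tendsto_pow_atTop_nhds_zero_of_lt_one (by norm_num) (by norm_num)
  have hnum := ((((h2.const_sub 1).div_const q).const_sub 1).sub
    ((((hq'.mul h2).const_sub 1).const_mul K).div_const (2 * q - 1))).const_mul 2
  have hlim := hnum.div (hq'.const_add 1) (by norm_num)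
  refine (hlim.congr' ?_).trans_eq (by simp [avgDistRate])
  filter_upwards [eventually_ge_atTop 1] with t ht
  exact (avgDist_div_two_pow_eq K hq ht).symm

theorem avgDistRate_sub_one_pos {q : ℝ} (hq : 1 < q) : 0 < avgDistRate q (q - 1) := by
  have hq0 : q ≠ 0 := by positivity
  have h2q : 2 * q - 1 ≠ 0 := by linarith
  have hrate : avgDistRate q (q - 1) = 2 * (q - 1) ^ 2 / (q * (2 * q - 1)) := by
    simp only [avgDistRate]
    field_simp
    ring
  rw [hrate]
  have : 0 < 2 * q - 1 := by linarith
  have : 0 < q - 1 := by linarith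
  positivity

end StarFractal

theorem avg_dist_starFractal_model_asymptotic_general (m : ℕ) :
    ∃ c : ℝ, 0 < c ∧
      Tendsto (fun t : ℕ =>
        (((2 * ((m : ℝ) + 2) ^ 2) ^ t
            - ((2 : ℝ) ^ t - 1) * ((m : ℝ) + 2) ^ (2 * t - 1)
            - ((m : ℝ) + 1) * ((m : ℝ) + 2) ^ t * ((2 * ((m : ℝ) + 2)) ^ t - 1)
              / (2 * ((m : ℝ) + 2) - 1)) /
          (((((m : ℝ) + 2) ^ t + 1) * ((((m : ℝ) + 2) ^ t + 1) - 1)) / 2)) / 2 ^ t)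
        atTop (nhds c) := by
  have hq : (1 : ℝ) < m + 2 := by linarith [m.cast_nonneg (α := ℝ)]
  have hK : (m : ℝ) + 1 = (m + 2) - 1 := by ring
  refine ⟨StarFractal.avgDistRate (m + 2) (m + 1), ?_,
    StarFractal.tendsto_avgDist_div_two_pow _ hq⟩
  rw [hK]
  exact StarFractal.avgDistRate_sub_one_pos hq

/-- For the star-fractal tree model with `m ≥ 1`, the average geodesic distance
`⟨S_t⟩ = S_t/(V_t(V_t-1)/2)` (with the given closed forms of `S_t` and `V_t`)
satisfies `⟨S_t⟩ / 2^t → c` for some positive constant `c` as `t → ∞`. -/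
theorem avg_dist_starFractal_model_asymptotic (m : ℕ) (hm : 1 ≤ m) :
    ∃ c : ℝ, 0 < c ∧
      Tendsto (fun t : ℕ =>
        (((2 * ((m : ℝ) + 2) ^ 2) ^ t
            - ((2 : ℝ) ^ t - 1) * ((m : ℝ) + 2) ^ (2 * t - 1)
            - ((m : ℝ) + 1) * ((m : ℝ) + 2) ^ t * ((2 * ((m : ℝ) + 2)) ^ t - 1)
              / (2 * ((m : ℝ) + 2) - 1)) /
          (((((m : ℝ) + 2) ^ t + 1) * ((((m : ℝ) + 2) ^ t + 1) - 1)) / 2)) / 2 ^ t)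
        atTop (nhds c) :=
  avg_dist_starFractal_model_asymptotic_general m
end
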